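/- Let V, g, φ, ξ, η, A, D be as in the context, let k be a nonzero real number, suppose Aξ = αξ for some real number α (the Hopf case) and that A satisfies the Maeda relations for α. Then it is impossible that A_T^{(k)}(X, φY) = φ(A_T^{(k)}(X, Y)) for all X, Y ∈ D. (Theorem 7, Hopf case: for each principal pair one gets (μ − α)(λ + μ) = 0, and each alternative is incompatible with the Maeda relations.) -/

import Mathlib

open scoped InnerProductSpace

/-- The `k`-th Cho operator `F^{(k)}_X Y = g(φ(AX), Y)·ξ − η(Y)·φ(AX) − k·η(X)·φY`. -/
noncomputable def choF {V : Type*} [NormedAddCommGroup V] [InnerProductSpace ℝ V]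
    (φ A : V →ₗ[ℝ] V) (ξ : V) (k : ℝ) (X Y : V) : V :=
  ⟪φ (A X), Y⟫_ℝ • ξ - ⟪Y, ξ⟫_ℝ • φ (A X) - (k * ⟪X, ξ⟫_ℝ) • φ Y

/-- The `k`-th torsion operator `T^{(k)}_X Y = F^{(k)}_X Y − F^{(k)}_Y X`. -/
noncomputable def torT {V : Type*} [NormedAddCommGroup V] [InnerProductSpace ℝ V]
    (φ A : V →ₗ[ℝ] V) (ξ : V) (k : ℝ) (X Y : V) : V :=
  choF φ A ξ k X Y - choF φ A ξ k Y X

/-- `A_T^{(k)}(X, Y) = T^{(k)}_X (A Y) − A (T^{(k)}_X Y)`. -/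
noncomputable def AT {V : Type*} [NormedAddCommGroup V] [InnerProductSpace ℝ V]
    (φ A : V →ₗ[ℝ] V) (ξ : V) (k : ℝ) (X Y : V) : V :=
  torT φ A ξ k X (A Y) - A (torT φ A ξ k X Y)

/-!
On the holomorphic distribution `D = ξ^⊥` the Cho operators lose their `k`-terms, and for
`X, Y ∈ D` one finds `A_T^{(k)}(X, Y) = g((φA + Aφ)X, (A − α)Y) ξ`. Since `φξ = 0`, the
commutation `A_T^{(k)}(X, φY) = φ A_T^{(k)}(X, Y)` therefore says `g((φA + Aφ)X, (A − α)φY) = 0`.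
For a unit principal vector `X ∈ D` with `AX = λX`, Maeda's relation gives `AφX = μφX` with
`μ(2λ − α) = αλ + 2`; testing on `(X, X)` and `(φX, φX)` gives `(λ + μ)(μ − α) = 0` and
`(λ + μ)(λ − α) = 0`. Now `μ = −λ` forces `−2λ² = 2`, and `λ = μ = α` forces `α² = α² + 2`.
-/

section AlmostContactMetric

variable {V : Type*} [NormedAddCommGroup V] [InnerProductSpace ℝ V]

structure IsAlmostContactMetric (φ : V →ₗ[ℝ] V) (ξ : V) : Prop where
  norm_xi : ‖ξ‖ = 1
  phi_phi : ∀ X : V, φ (φ X) = -X + ⟪X, ξ⟫_ℝ • ξ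
  inner_phi_phi : ∀ X Y : V, ⟪φ X, φ Y⟫_ℝ = ⟪X, Y⟫_ℝ - ⟪X, ξ⟫_ℝ * ⟪Y, ξ⟫_ℝ

namespace IsAlmostContactMetric

variable {φ : V →ₗ[ℝ] V} {ξ : V} (hφ : IsAlmostContactMetric φ ξ)
include hφ

theorem xi_ne_zero : ξ ≠ 0 :=
  norm_ne_zero_iff.1 (by rw [hφ.norm_xi]; exact one_ne_zero)

theorem phi_xi : φ ξ = 0 := by
  refine (inner_self_eq_zero (𝕜 := ℝ)).1 ?_
  rw [hφ.inner_phi_phi, real_inner_self_eq_norm_sq, hφ.norm_xi]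
  ring

theorem inner_phi_xi (X : V) : ⟪φ X, ξ⟫_ℝ = 0 := by
  have h := congrArg φ (hφ.phi_phi X)
  rw [hφ.phi_phi (φ X), map_add, map_neg, map_smul, hφ.phi_xi, smul_zero, add_zero,
    add_eq_left] at h
  exact (smul_eq_zero.1 h).resolve_right hφ.xi_ne_zero

theorem inner_phi_left (X Y : V) : ⟪φ X, Y⟫_ℝ = -⟪X, φ Y⟫_ℝ := by
  have h := hφ.inner_phi_phi X (φ Y)
  rw [hφ.phi_phi Y, inner_add_right, inner_neg_right, real_inner_smul_right,
    hφ.inner_phi_xi, hφ.inner_phi_xi, mul_zero, add_zero, mul_zero, sub_zero] at h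
  linarith

end IsAlmostContactMetric

section ShapeOperator

variable {A : V →ₗ[ℝ] V} {ξ : V} {α : ℝ}

theorem LinearMap.IsSymmetric.inner_apply_eq_mul_of_apply_eq_smul (hA : A.IsSymmetric)
    (hAξ : A ξ = α • ξ) (X : V) : ⟪A X, ξ⟫_ℝ = α * ⟪X, ξ⟫_ℝ := by
  rw [hA, hAξ, real_inner_smul_right]

theorem LinearMap.IsSymmetric.exists_unit_eigenvector_orthogonal [FiniteDimensional ℝ V]
    (hdim : 2 ≤ Module.finrank ℝ V) (hA : A.IsSymmetric) (hAξ : A ξ = α • ξ) :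
    ∃ (X : V) (l : ℝ), ‖X‖ = 1 ∧ ⟪X, ξ⟫_ℝ = 0 ∧ A X = l • X := by
  have hAD : ∀ X ∈ (ℝ ∙ ξ)ᗮ, A X ∈ (ℝ ∙ ξ)ᗮ := fun X hX => by
    rw [Submodule.mem_orthogonal_singleton_iff_inner_left] at hX ⊢
    rw [hA.inner_apply_eq_mul_of_apply_eq_smul hAξ, hX, mul_zero]
  have : Nontrivial (ℝ ∙ ξ)ᗮ := by
    refine Module.nontrivial_of_finrank_pos (R := ℝ) ?_
    have hξ : Module.finrank ℝ (ℝ ∙ ξ) ≤ 1 :=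
      (finrank_span_le_card ({ξ} : Set V)).trans (by simp)
    have := (ℝ ∙ ξ).finrank_add_finrank_orthogonal
    omega
  obtain ⟨l, v, hv⟩ : ∃ (l : ℝ) (v : (ℝ ∙ ξ)ᗮ), Module.End.HasEigenvector (A.restrict hAD) l v :=
    ⟨_, (hA.restrict_invariant hAD).hasEigenvalue_iSup_of_finiteDimensional.exists_hasEigenvector⟩
  set X := (‖v‖⁻¹ : ℝ) • v
  have hX : A.restrict hAD X = l • X := by rw [map_smul, hv.apply_eq_smul, smul_comm]
  refine ⟨X, l, ?_, ?_, congrArg Subtype.val hX⟩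
  · exact (norm_smul_inv_norm hv.2 : ‖X‖ = 1)
  · exact Submodule.mem_orthogonal_singleton_iff_inner_left.1 X.2

end ShapeOperator

section Torsion

variable {φ A : V →ₗ[ℝ] V} {ξ : V} {α k : ℝ}

theorem torT_eq_of_inner_eq_zero (hφ : IsAlmostContactMetric φ ξ) (hA : A.IsSymmetric)
    {X Y : V} (hX : ⟪X, ξ⟫_ℝ = 0) (hY : ⟪Y, ξ⟫_ℝ = 0) :
    torT φ A ξ k X Y = ⟪φ (A X) + A (φ X), Y⟫_ℝ • ξ := by
  have hswap : ⟪φ (A Y), X⟫_ℝ = -⟪A (φ X), Y⟫_ℝ := by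
    rw [hφ.inner_phi_left, hA, real_inner_comm]
  simp only [torT, choF, hX, hY, mul_zero, zero_smul, sub_zero]
  rw [hswap, inner_add_left, ← sub_smul, sub_neg_eq_add]

theorem AT_eq_of_inner_eq_zero (hφ : IsAlmostContactMetric φ ξ) (hA : A.IsSymmetric)
    (hAξ : A ξ = α • ξ) {X Y : V} (hX : ⟪X, ξ⟫_ℝ = 0) (hY : ⟪Y, ξ⟫_ℝ = 0) :
    AT φ A ξ k X Y = ⟪φ (A X) + A (φ X), A Y - α • Y⟫_ℝ • ξ := by
  have hAY : ⟪A Y, ξ⟫_ℝ = 0 := by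
    rw [hA.inner_apply_eq_mul_of_apply_eq_smul hAξ, hY, mul_zero]
  rw [AT, torT_eq_of_inner_eq_zero hφ hA hX hAY, torT_eq_of_inner_eq_zero hφ hA hX hY, map_smul,
    hAξ, smul_smul, ← sub_smul, inner_sub_right, real_inner_smul_right, mul_comm]

theorem inner_eq_zero_of_AT_phi_eq (hφ : IsAlmostContactMetric φ ξ) (hA : A.IsSymmetric)
    (hAξ : A ξ = α • ξ) {X Y : V} (hX : ⟪X, ξ⟫_ℝ = 0) (hY : ⟪Y, ξ⟫_ℝ = 0)
    (h : AT φ A ξ k X (φ Y) = φ (AT φ A ξ k X Y)) :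
    ⟪φ (A X) + A (φ X), A (φ Y) - α • φ Y⟫_ℝ = 0 := by
  rw [AT_eq_of_inner_eq_zero hφ hA hAξ hX (hφ.inner_phi_xi Y),
    AT_eq_of_inner_eq_zero hφ hA hAξ hX hY, map_smul, hφ.phi_xi, smul_zero] at h
  exact (smul_eq_zero.1 h).resolve_right hφ.xi_ne_zero

theorem principal_relations_of_forall_AT_phi_eq (hφ : IsAlmostContactMetric φ ξ)
    (hA : A.IsSymmetric) (hAξ : A ξ = α • ξ) {X : V} {l μ : ℝ} (hX : ‖X‖ = 1)
    (hXξ : ⟪X, ξ⟫_ℝ = 0) (hAX : A X = l • X) (hAφX : A (φ X) = μ • φ X)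
    (h : ∀ X Y : V, ⟪X, ξ⟫_ℝ = 0 → ⟪Y, ξ⟫_ℝ = 0 → AT φ A ξ k X (φ Y) = φ (AT φ A ξ k X Y)) :
    (l + μ) * (μ - α) = 0 ∧ (l + μ) * (l - α) = 0 := by
  have hXX : ⟪X, X⟫_ℝ = 1 := by rw [real_inner_self_eq_norm_sq, hX, one_pow]
  have hφXX : ⟪φ X, φ X⟫_ℝ = 1 := by rw [hφ.inner_phi_phi, hXX, hXξ, mul_zero, sub_zero]
  have hφφX : φ (φ X) = -X := by rw [hφ.phi_phi, hXξ, zero_smul, add_zero]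
  have hφξ := hφ.inner_phi_xi X
  constructor
  · have h₁ := inner_eq_zero_of_AT_phi_eq hφ hA hAξ hXξ hXξ (h X X hXξ hXξ)
    rwa [hAX, hAφX, map_smul, ← add_smul, ← sub_smul, real_inner_smul_left,
      real_inner_smul_right, hφXX, mul_one] at h₁
  · have h₂ := inner_eq_zero_of_AT_phi_eq hφ hA hAξ hφξ hφξ (h (φ X) (φ X) hφξ hφξ)
    rw [hφφX, hAφX, map_smul, hφφX, map_neg, hAX, ← smul_neg, ← add_smul, ← sub_smul,
      real_inner_smul_left, real_inner_smul_right, inner_neg_neg, hXX] at h₂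
    linear_combination h₂

end Torsion

end AlmostContactMetric

theorem maeda_relation_ne_of_principal_relations {l μ α : ℝ}
    (h₁ : (l + μ) * (μ - α) = 0) (h₂ : (l + μ) * (l - α) = 0) :
    μ * (2 * l - α) ≠ α * l + 2 := by
  intro hμ
  by_cases hlμ : l + μ = 0
  · obtain rfl : μ = -l := by linarith
    nlinarith [sq_nonneg l]
  · obtain rfl : μ = α := by simpa [hlμ, sub_eq_zero] using h₁
    obtain rfl : l = μ := by simpa [hlμ, sub_eq_zero] using h₂
    linarith

theorem thm7_hopf_general {V : Type*} [NormedAddCommGroup V] [InnerProductSpace ℝ V]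
    [FiniteDimensional ℝ V] (hdim : 5 ≤ Module.finrank ℝ V)
    (φ : V →ₗ[ℝ] V) (ξ : V) (hξ : ‖ξ‖ = 1)
    (hφφ : ∀ X : V, φ (φ X) = -X + ⟪X, ξ⟫_ℝ • ξ)
    (hφg : ∀ X Y : V, ⟪φ X, φ Y⟫_ℝ = ⟪X, Y⟫_ℝ - ⟪X, ξ⟫_ℝ * ⟪Y, ξ⟫_ℝ)
    (A : V →ₗ[ℝ] V) (hA : ∀ X Y : V, ⟪A X, Y⟫_ℝ = ⟪X, A Y⟫_ℝ)
    (k : ℝ)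
    (α : ℝ) (hAξ : A ξ = α • ξ)
    (hMaeda : ∀ (X : V) (l : ℝ), ‖X‖ = 1 → ⟪X, ξ⟫_ℝ = 0 → A X = l • X →
      2 * l - α ≠ 0 ∧ A (φ X) = ((α * l + 2) / (2 * l - α)) • φ X) :
    ¬ (∀ X Y : V, ⟪X, ξ⟫_ℝ = 0 → ⟪Y, ξ⟫_ℝ = 0 →
      AT φ A ξ k X (φ Y) = φ (AT φ A ξ k X Y)) := by
  intro h
  have hφ : IsAlmostContactMetric φ ξ := ⟨hξ, hφφ, hφg⟩
  have hA : A.IsSymmetric := hA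
  obtain ⟨X, l, hX, hXξ, hAX⟩ := hA.exists_unit_eigenvector_orthogonal (by omega) hAξ
  obtain ⟨hl, hAφX⟩ := hMaeda X l hX hXξ hAX
  obtain ⟨h₁, h₂⟩ := principal_relations_of_forall_AT_phi_eq hφ hA hAξ hX hXξ hAX hAφX h
  exact maeda_relation_ne_of_principal_relations h₁ h₂ (div_mul_cancel₀ _ hl)

theorem thm7_hopf {V : Type*} [NormedAddCommGroup V] [InnerProductSpace ℝ V]
    [FiniteDimensional ℝ V] (hdim : 5 ≤ Module.finrank ℝ V)
    (φ : V →ₗ[ℝ] V) (ξ : V) (hξ : ‖ξ‖ = 1)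
    (hφφ : ∀ X : V, φ (φ X) = -X + ⟪X, ξ⟫_ℝ • ξ)
    (hφg : ∀ X Y : V, ⟪φ X, φ Y⟫_ℝ = ⟪X, Y⟫_ℝ - ⟪X, ξ⟫_ℝ * ⟪Y, ξ⟫_ℝ)
    (A : V →ₗ[ℝ] V) (hA : ∀ X Y : V, ⟪A X, Y⟫_ℝ = ⟪X, A Y⟫_ℝ)
    (k : ℝ) (hk : k ≠ 0)
    (α : ℝ) (hAξ : A ξ = α • ξ)
    (hMaeda : ∀ (X : V) (l : ℝ), ‖X‖ = 1 → ⟪X, ξ⟫_ℝ = 0 → A X = l • X →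
      2 * l - α ≠ 0 ∧ A (φ X) = ((α * l + 2) / (2 * l - α)) • φ X) :
    ¬ (∀ X Y : V, ⟪X, ξ⟫_ℝ = 0 → ⟪Y, ξ⟫_ℝ = 0 →
      AT φ A ξ k X (φ Y) = φ (AT φ A ξ k X Y)) :=
  thm7_hopf_general hdim φ ξ hξ hφφ hφg A hA k α hAξ hMaeda
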